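/- arXiv:2508.08412 — 7 statements merged into one kernel-verified Lean document; each statement's English description precedes it below -/
import Mathlib

section
/- Let E be a finite-dimensional real inner product space, let W and U be subspaces of E, and let y ∈ E with y ∉ W. Let U' = (id − P_W)(U) be the image of U under the map sending each vector to its residual from W. Then ‖P_{U'}(y − P_W y)‖² / ‖y − P_W y‖² = (‖P_{W ⊔ U} y‖² − ‖P_W y‖²) / (‖y‖² − ‖P_W y‖²). Equivalently, in terms of coefficients of determination, R²_{U'; r(y;W)} = (R²_{W⊔U; y} − R²_{W; y}) / (1 − R²_{W; y}). -/
open RealInnerProductSpace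

theorem stmt_0 {E : Type*} [NormedAddCommGroup E] [InnerProductSpace ℝ E]
    [FiniteDimensional ℝ E] (W U : Submodule ℝ E) (y : E) (hy : y ∉ W)
    (U' : Submodule ℝ E)
    (hU' : U' = U.map (LinearMap.id - W.subtype ∘ₗ (Submodule.orthogonalProjectionOnto W).toLinearMap)) :
    ‖(Submodule.orthogonalProjectionOnto U' (y - (Submodule.orthogonalProjectionOnto W y : E)) : E)‖ ^ 2 /
        ‖y - (Submodule.orthogonalProjectionOnto W y : E)‖ ^ 2 =
      (‖(Submodule.orthogonalProjectionOnto (W ⊔ U) y : E)‖ ^ 2 - ‖(Submodule.orthogonalProjectionOnto W y : E)‖ ^ 2) /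
        (‖y‖ ^ 2 - ‖(Submodule.orthogonalProjectionOnto W y : E)‖ ^ 2) := by
  -- U' ≤ Wᗮ
  have hU'le : U' ≤ Wᗮ := by
    rw [hU']
    rintro x ⟨u, hu, rfl⟩
    simpa using Submodule.sub_starProjection_mem_orthogonal (K := W) u
  have hWle : W ≤ U'ᗮ := (Submodule.le_orthogonal_orthogonal W).trans (Submodule.orthogonal_le hU'le)
  -- W ⊔ U = W ⊔ U'
  have hsup : W ⊔ U = W ⊔ U' := by
    apply le_antisymm
    · refine sup_le le_sup_left ?_
      intro u hu
      have : u = (Submodule.orthogonalProjectionOnto W u : E) + (u - Submodule.orthogonalProjectionOnto W u) := by abel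
      rw [this]
      exact Submodule.add_mem _ (Submodule.mem_sup_left (Submodule.orthogonalProjectionOnto W u).2)
        (Submodule.mem_sup_right (hU' ▸ ⟨u, hu, rfl⟩))
    · refine sup_le le_sup_left ?_
      rw [hU']
      rintro x ⟨u, hu, rfl⟩
      exact Submodule.sub_mem _ (Submodule.mem_sup_right hu)
        (Submodule.mem_sup_left (Submodule.orthogonalProjectionOnto W u).2)
  -- projection onto W ⊔ U' splits
  have hsplit : (Submodule.orthogonalProjectionOnto (W ⊔ U) y : E) =
      (Submodule.orthogonalProjectionOnto W y : E) + (Submodule.orthogonalProjectionOnto U' y : E) := by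
    apply Submodule.eq_starProjection_of_mem_of_inner_eq_zero
    · rw [hsup]
      exact Submodule.add_mem _ (Submodule.mem_sup_left (Submodule.orthogonalProjectionOnto W y).2)
        (Submodule.mem_sup_right (Submodule.orthogonalProjectionOnto U' y).2)
    · intro w hw
      rw [hsup, Submodule.mem_sup] at hw
      obtain ⟨a, ha, b, hb, rfl⟩ := hw
      have h1 : ⟪y - Submodule.orthogonalProjectionOnto W y, a⟫ = 0 := by
        rw [real_inner_comm]
        exact Submodule.sub_starProjection_mem_orthogonal (K := W) y a ha
      have h2 : ⟪y - Submodule.orthogonalProjectionOnto U' y, b⟫ = 0 := by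
        rw [real_inner_comm]
        exact Submodule.sub_starProjection_mem_orthogonal (K := U') y b hb
      have h3 : ⟪(Submodule.orthogonalProjectionOnto U' y : E), a⟫ = 0 := by
        rw [real_inner_comm]; exact hU'le (Submodule.orthogonalProjectionOnto U' y).2 a ha
      have h4 : ⟪(Submodule.orthogonalProjectionOnto W y : E), b⟫ = 0 := by
        rw [real_inner_comm]; exact hWle (Submodule.orthogonalProjectionOnto W y).2 b hb
      have e1 : y - ((Submodule.orthogonalProjectionOnto W y : E) + (Submodule.orthogonalProjectionOnto U' y : E)) =
          (y - Submodule.orthogonalProjectionOnto W y) - Submodule.orthogonalProjectionOnto U' y := by abel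
      have e2 : y - ((Submodule.orthogonalProjectionOnto W y : E) + (Submodule.orthogonalProjectionOnto U' y : E)) =
          (y - Submodule.orthogonalProjectionOnto U' y) - Submodule.orthogonalProjectionOnto W y := by abel
      rw [inner_add_right]
      nth_rewrite 1 [e1]
      rw [e2]
      rw [inner_sub_left, inner_sub_left, inner_sub_left, h3, h4]
      rw [inner_sub_left] at h1
      linarith
  -- P_{U'}(y - P_W y) = P_{U'} y
  have hproj : (Submodule.orthogonalProjectionOnto U' (y - Submodule.orthogonalProjectionOnto W y) : E) =
      (Submodule.orthogonalProjectionOnto U' y : E) := by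
    rw [map_sub, Submodule.orthogonalProjectionOnto_apply_of_mem_orthogonal
      (hWle (Submodule.orthogonalProjectionOnto W y).2)]
    simp
  -- Pythagoras facts
  have horth : ⟪(Submodule.orthogonalProjectionOnto W y : E), (Submodule.orthogonalProjectionOnto U' y : E)⟫ = 0 := by
    rw [real_inner_comm]
    exact hWle (Submodule.orthogonalProjectionOnto W y).2 _ (Submodule.orthogonalProjectionOnto U' y).2
  have hpy1 : ‖(Submodule.orthogonalProjectionOnto (W ⊔ U) y : E)‖ ^ 2 =
      ‖(Submodule.orthogonalProjectionOnto W y : E)‖ ^ 2 + ‖(Submodule.orthogonalProjectionOnto U' y : E)‖ ^ 2 := by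
    rw [hsplit, norm_add_sq_real, horth]
    ring
  have hpy2 : ‖y - (Submodule.orthogonalProjectionOnto W y : E)‖ ^ 2 =
      ‖y‖ ^ 2 - ‖(Submodule.orthogonalProjectionOnto W y : E)‖ ^ 2 := by
    have h1 : ⟪y - Submodule.orthogonalProjectionOnto W y, (Submodule.orthogonalProjectionOnto W y : E)⟫ = 0 := by
      rw [real_inner_comm]
      exact Submodule.sub_starProjection_mem_orthogonal (K := W) y _ (Submodule.orthogonalProjectionOnto W y).2
    have hadd := norm_add_sq_real (y - (Submodule.orthogonalProjectionOnto W y : E))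
      (Submodule.orthogonalProjectionOnto W y : E)
    rw [sub_add_cancel, h1] at hadd
    linarith
  rw [hproj, hpy1, hpy2]
  ring
end

section
/- Let E be a finite-dimensional real inner product space, let W and U be subspaces of E, let y ∈ E with y ∉ W, and let U' = (id − P_W)(U). Suppose B is a real number with R²_{W⊔U; y} ≤ B < 1. Then 0 ≤ R²_{U'; r(y;W)} ≤ (B − R²_{W; y}) / (1 − R²_{W; y}) < 1, where r(y;W) = y − P_W y. -/
open RealInnerProductSpace

theorem stmt_1 {E : Type*} [NormedAddCommGroup E] [InnerProductSpace ℝ E]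
    [FiniteDimensional ℝ E] (W U : Submodule ℝ E) (y : E) (hy : y ∉ W)
    (U' : Submodule ℝ E)
    (hU' : U' = U.map (LinearMap.id - W.subtype ∘ₗ (Submodule.orthogonalProjectionOnto W).toLinearMap))
    (B : ℝ) (hB₁ : ‖(Submodule.orthogonalProjectionOnto (W ⊔ U) y : E)‖ ^ 2 / ‖y‖ ^ 2 ≤ B) (hB₂ : B < 1) :
    0 ≤ ‖(Submodule.orthogonalProjectionOnto U' (y - (Submodule.orthogonalProjectionOnto W y : E)) : E)‖ ^ 2 /
          ‖y - (Submodule.orthogonalProjectionOnto W y : E)‖ ^ 2 ∧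
    ‖(Submodule.orthogonalProjectionOnto U' (y - (Submodule.orthogonalProjectionOnto W y : E)) : E)‖ ^ 2 /
          ‖y - (Submodule.orthogonalProjectionOnto W y : E)‖ ^ 2 ≤
        (B - ‖(Submodule.orthogonalProjectionOnto W y : E)‖ ^ 2 / ‖y‖ ^ 2) /
          (1 - ‖(Submodule.orthogonalProjectionOnto W y : E)‖ ^ 2 / ‖y‖ ^ 2) ∧
    (B - ‖(Submodule.orthogonalProjectionOnto W y : E)‖ ^ 2 / ‖y‖ ^ 2) /
          (1 - ‖(Submodule.orthogonalProjectionOnto W y : E)‖ ^ 2 / ‖y‖ ^ 2) < 1 := by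
  classical
  set r : E := y - (Submodule.orthogonalProjectionOnto W y : E) with hr
  -- U' ⊆ Wᗮ
  have hU'W : U' ≤ Wᗮ := by
    rw [hU']
    rintro x ⟨u, -, rfl⟩
    simpa using Submodule.sub_starProjection_mem_orthogonal (K := W) u
  -- W ⊔ U' = W ⊔ U
  have hsup : W ⊔ U' = W ⊔ U := by
    apply le_antisymm
    · refine sup_le le_sup_left ?_
      rw [hU']
      rintro x ⟨u, hu, rfl⟩
      simp only [LinearMap.sub_apply, LinearMap.id_apply, LinearMap.coe_comp,
        Function.comp_apply, Submodule.coe_subtype, ContinuousLinearMap.coe_coe]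
      exact Submodule.sub_mem _ (Submodule.mem_sup_right hu)
        (Submodule.mem_sup_left (Submodule.orthogonalProjectionOnto W u).2)
    · refine sup_le le_sup_left ?_
      intro u hu
      have h1 : u - (Submodule.orthogonalProjectionOnto W u : E) ∈ U' := by
        rw [hU']; exact ⟨u, hu, rfl⟩
      have : u = (Submodule.orthogonalProjectionOnto W u : E) + (u - (Submodule.orthogonalProjectionOnto W u : E)) := by
        abel
      rw [this]
      exact Submodule.add_mem _ (Submodule.mem_sup_left (Submodule.orthogonalProjectionOnto W u).2)
        (Submodule.mem_sup_right h1)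
  have hrW : r ∈ Wᗮ := Submodule.sub_starProjection_mem_orthogonal y
  -- P_{U'} r = P_{U'} y
  have hproj_r : (Submodule.orthogonalProjectionOnto U' r : E) = (Submodule.orthogonalProjectionOnto U' y : E) := by
    have h0 : Submodule.orthogonalProjectionOnto U' ((Submodule.orthogonalProjectionOnto W y : E)) = 0 :=
      Submodule.orthogonalProjectionOnto_apply_of_mem_orthogonal
        ((Submodule.orthogonal_le hU'W) (W.le_orthogonal_orthogonal
          (Submodule.orthogonalProjectionOnto W y).2))
    have := map_sub (Submodule.orthogonalProjectionOnto U') y ((Submodule.orthogonalProjectionOnto W y : E))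
    rw [hr]
    rw [this, h0, sub_zero]
  -- projection onto sup
  have hsplit : (Submodule.orthogonalProjectionOnto (W ⊔ U) y : E)
      = (Submodule.orthogonalProjectionOnto W y : E) + (Submodule.orthogonalProjectionOnto U' y : E) := by
    apply Submodule.eq_starProjection_of_mem_of_inner_eq_zero
    · rw [← hsup]
      exact Submodule.add_mem _ (Submodule.mem_sup_left (Submodule.orthogonalProjectionOnto W y).2)
        (Submodule.mem_sup_right (Submodule.orthogonalProjectionOnto U' y).2)
    · intro w hw
      rw [← hsup] at hw
      obtain ⟨w₁, hw₁, w₂, hw₂, rfl⟩ := Submodule.mem_sup.1 hw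
      have h1 : ⟪y - (Submodule.orthogonalProjectionOnto W y : E), w₁⟫ = 0 := by
        rw [real_inner_comm]; exact hrW w₁ hw₁
      have h2 : ⟪(Submodule.orthogonalProjectionOnto U' y : E), w₁⟫ = 0 := by
        rw [real_inner_comm]; exact hU'W (Submodule.orthogonalProjectionOnto U' y).2 w₁ hw₁
      have h3 : ⟪y - (Submodule.orthogonalProjectionOnto U' y : E), w₂⟫ = 0 := by
        rw [real_inner_comm]; exact Submodule.sub_starProjection_mem_orthogonal (K := U') y w₂ hw₂
      have h4 : ⟪(Submodule.orthogonalProjectionOnto W y : E), w₂⟫ = 0 :=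
        hU'W hw₂ _ (Submodule.orthogonalProjectionOnto W y).2
      have e1 : y - ((Submodule.orthogonalProjectionOnto W y : E) + (Submodule.orthogonalProjectionOnto U' y : E))
          = (y - (Submodule.orthogonalProjectionOnto W y : E)) - (Submodule.orthogonalProjectionOnto U' y : E) := by abel
      have e2 : y - ((Submodule.orthogonalProjectionOnto W y : E) + (Submodule.orthogonalProjectionOnto U' y : E))
          = (y - (Submodule.orthogonalProjectionOnto U' y : E)) - (Submodule.orthogonalProjectionOnto W y : E) := by abel
      rw [inner_add_right]
      rw [show (⟪y - ((Submodule.orthogonalProjectionOnto W y : E) + (Submodule.orthogonalProjectionOnto U' y : E)), w₁⟫ : ℝ) = 0 by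
        rw [e1, inner_sub_left, h1, h2, sub_zero]]
      rw [show (⟪y - ((Submodule.orthogonalProjectionOnto W y : E) + (Submodule.orthogonalProjectionOnto U' y : E)), w₂⟫ : ℝ) = 0 by
        rw [e2, inner_sub_left, h3, h4, sub_zero]]
      ring
  -- norms
  set a : ℝ := ‖(Submodule.orthogonalProjectionOnto W y : E)‖ ^ 2 with ha
  set c : ℝ := ‖(Submodule.orthogonalProjectionOnto U' r : E)‖ ^ 2 with hc
  set n : ℝ := ‖y‖ ^ 2 with hn
  have hsum : ‖(Submodule.orthogonalProjectionOnto (W ⊔ U) y : E)‖ ^ 2 = a + c := by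
    rw [hsplit, hc, hproj_r, ha]
    simp only [sq]
    exact norm_add_sq_eq_norm_sq_add_norm_sq_of_inner_eq_zero _ _
      (hU'W (Submodule.orthogonalProjectionOnto U' y).2 _ (Submodule.orthogonalProjectionOnto W y).2)
  have hpyth : n = a + ‖r‖ ^ 2 := by
    have hyd : y = (Submodule.orthogonalProjectionOnto W y : E) + r := by rw [hr]; abel
    rw [hn, ha]
    conv_lhs => rw [hyd]
    simp only [sq]
    exact norm_add_sq_eq_norm_sq_add_norm_sq_of_inner_eq_zero _ _
      (hrW _ (Submodule.orthogonalProjectionOnto W y).2)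
  have hrne : r ≠ 0 := by
    intro h
    apply hy
    have hyP : y = (Submodule.orthogonalProjectionOnto W y : E) := sub_eq_zero.1 h
    exact hyP ▸ (Submodule.orthogonalProjectionOnto W y).2
  have hrpos : (0:ℝ) < ‖r‖ ^ 2 := pow_pos (norm_pos_iff.2 hrne) 2
  have hnpos : (0:ℝ) < n := by
    rw [hn]
    have : y ≠ 0 := fun h => hy (h ▸ W.zero_mem)
    exact pow_pos (norm_pos_iff.2 this) 2
  have ha0 : 0 ≤ a := by positivity
  have hc0 : 0 ≤ c := by positivity
  have hB : a + c ≤ B * n := by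
    have := (div_le_iff₀ hnpos).1 (hsum ▸ hB₁)
    linarith
  have hlt : a < n := by linarith
  have hd1 : (0:ℝ) < 1 - a / n := by rw [sub_pos, div_lt_one hnpos]; exact hlt
  have hd2 : (0:ℝ) < n - a := by linarith
  have hkey : (B - a / n) / (1 - a / n) = (B * n - a) / (n - a) := by
    rw [div_eq_div_iff hd1.ne' hd2.ne']
    field_simp
    try ring
  have hna : n - a = ‖r‖ ^ 2 := by linarith
  refine ⟨by positivity, ?_, ?_⟩
  · rw [hkey, ← hna]
    have h2 : 0 < n - a := hna ▸ hrpos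
    exact (div_le_div_iff_of_pos_right h2).mpr (by linarith)
  · rw [hkey]
    rw [div_lt_one (by linarith)]
    nlinarith
end

section
/- (Frisch–Waugh–Lovell-type identity.) Let E be a finite-dimensional real inner product space, let W and U be subspaces of E, and let x, y ∈ E with x ∉ W ⊔ U. Let r_x = x − P_W x, r_y = y − P_W y, and U' = (id − P_W)(U). Then r_x ∉ U', and the least-squares slope coefficient of r_x in the regression of r_y onto span{r_x} ⊔ U' equals the least-squares slope coefficient of x in the regression of y onto span{x} ⊔ (W ⊔ U). That is, β_{r(x;W).r(y;W)|U'} = β_{x.y|W⊔U}. -/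
open RealInnerProductSpace

/-- Frisch–Waugh–Lovell-type identity: the slope on the residualized treatment in the
residualized regression equals the slope on the treatment in the full regression. -/
theorem stmt_7 {E : Type*} [NormedAddCommGroup E] [InnerProductSpace ℝ E]
    [FiniteDimensional ℝ E] (W U : Submodule ℝ E) (x y : E) (hx : x ∉ W ⊔ U)
    (rx ry : E)
    (hrx : rx = x - (Submodule.orthogonalProjection W x : E))
    (hry : ry = y - (Submodule.orthogonalProjection W y : E))
    (U' : Submodule ℝ E)
    (hU' : U' = U.map (LinearMap.id - W.subtype ∘ₗ (Submodule.orthogonalProjection W).toLinearMap)) :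
    rx ∉ U' ∧
      ∀ β₁ β₂ : ℝ,
        (∃ v ∈ U', (Submodule.orthogonalProjection (Submodule.span ℝ {rx} ⊔ U') ry : E) = β₁ • rx + v) →
        (∃ v ∈ W ⊔ U,
          (Submodule.orthogonalProjection (Submodule.span ℝ {x} ⊔ (W ⊔ U)) y : E) = β₂ • x + v) →
        β₁ = β₂ := by
  set M : E →ₗ[ℝ] E := LinearMap.id - W.subtype ∘ₗ (Submodule.orthogonalProjection W).toLinearMap with hMdef
  have hM : ∀ z : E, M z = z - (Submodule.orthogonalProjection W z : E) := fun z => rfl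
  have hMorth : ∀ z : E, M z ∈ Wᗮ := fun z => by
    rw [hM]; exact Submodule.sub_starProjection_mem_orthogonal z
  have hMW : ∀ z ∈ W, M z = 0 := fun z hz => by
    rw [hM, sub_eq_zero, eq_comm]; exact Submodule.starProjection_eq_self_iff.mpr hz
  have hMzero : ∀ z : E, M z = 0 → z ∈ W := fun z hz => by
    rw [hM, sub_eq_zero] at hz
    rw [hz]; exact (Submodule.orthogonalProjection W z).2
  have hrxU' : rx ∉ U' := by
    intro h
    rw [hU'] at h
    obtain ⟨u, hu, hMu⟩ := h
    have : M (x - u) = 0 := by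
      rw [map_sub, hMu, hM, ← hrx, sub_self]
    exact hx (Submodule.mem_sup.mpr ⟨x - u, hMzero _ this, u, hu, by abel⟩)
  refine ⟨hrxU', ?_⟩
  intro β₁ β₂ ⟨v₁, hv₁, heq1⟩ ⟨v₂, hv₂, heq2⟩
  set S : Submodule ℝ E := Submodule.span ℝ {rx} ⊔ U' with hSdef
  set T : Submodule ℝ E := Submodule.span ℝ {x} ⊔ (W ⊔ U) with hTdef
  have hrxW : rx ∈ Wᗮ := by rw [hrx]; exact Submodule.sub_starProjection_mem_orthogonal x
  have hU'W : U' ≤ Wᗮ := by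
    rw [hU']; rintro _ ⟨u, hu, rfl⟩; exact hMorth u
  have hSW : S ≤ Wᗮ :=
    sup_le ((Submodule.span_singleton_le_iff_mem _ _).mpr hrxW) hU'W
  have hWS : W ≤ Sᗮ := le_trans (Submodule.le_orthogonal_orthogonal W) (Submodule.orthogonal_le hSW)
  have hPzero : ∀ z ∈ Sᗮ, (Submodule.orthogonalProjection S z : E) = 0 := fun z hz => by
    rw [Submodule.orthogonalProjectionOnto_apply_of_mem_orthogonal hz]
    rfl
  have hPself : ∀ z ∈ S, (Submodule.orthogonalProjection S z : E) = z := fun z hz =>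
    (Submodule.starProjection_eq_self_iff.mpr hz)
  have hrxS : rx ∈ S := Submodule.mem_sup_left (Submodule.mem_span_singleton_self rx)
  -- P_S ry = P_S y
  have hproj_ry : (Submodule.orthogonalProjection S ry : E) = (Submodule.orthogonalProjection S y : E) := by
    rw [hry, map_sub]
    push_cast
    rw [hPzero _ (hWS (Submodule.orthogonalProjection W y).2), sub_zero]
  -- S ≤ T
  have hST : S ≤ T := by
    apply sup_le
    · rw [Submodule.span_singleton_le_iff_mem, hrx]
      exact Submodule.sub_mem _ (Submodule.mem_sup_left (Submodule.mem_span_singleton_self x))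
        (Submodule.mem_sup_right (Submodule.mem_sup_left (Submodule.orthogonalProjection W x).2))
    · rw [hU']
      rintro _ ⟨u, hu, rfl⟩
      rw [hM]
      exact Submodule.sub_mem _ (Submodule.mem_sup_right (Submodule.mem_sup_right hu))
        (Submodule.mem_sup_right (Submodule.mem_sup_left (Submodule.orthogonalProjection W u).2))
  -- P_S y = P_S (P_T y)
  have hyT : (Submodule.orthogonalProjection S y : E)
      = (Submodule.orthogonalProjection S ((Submodule.orthogonalProjection T y : E)) : E) := by
    have h1 : y - (Submodule.orthogonalProjection T y : E) ∈ Sᗮ :=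
      Submodule.orthogonal_le hST (Submodule.sub_starProjection_mem_orthogonal y)
    have h2 := hPzero _ h1
    rw [map_sub] at h2
    push_cast at h2
    exact sub_eq_zero.mp h2
  -- compute P_S (P_T y)
  obtain ⟨w, hw, u, hu, rfl⟩ := Submodule.mem_sup.mp hv₂
  have hMuU' : M u ∈ U' := by rw [hU']; exact ⟨u, hu, rfl⟩
  have hPSx : (Submodule.orthogonalProjection S x : E) = rx := by
    have hxsplit : x = rx + (Submodule.orthogonalProjection W x : E) := by rw [hrx]; abel
    rw [hxsplit, map_add]
    push_cast
    rw [hPself _ hrxS, hPzero _ (hWS (Submodule.orthogonalProjection W x).2), add_zero]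
  have hPSw : (Submodule.orthogonalProjection S w : E) = 0 := hPzero _ (hWS hw)
  have hPSu : (Submodule.orthogonalProjection S u : E) = M u := by
    have husplit : u = M u + (Submodule.orthogonalProjection W u : E) := by rw [hM]; abel
    conv_lhs => rw [husplit]
    rw [map_add]
    push_cast
    rw [hPself _ (le_sup_right (a := Submodule.span ℝ {rx}) hMuU'),
      hPzero _ (hWS (Submodule.orthogonalProjection W u).2), add_zero]
  have hkey : (Submodule.orthogonalProjection S y : E) = β₂ • rx + M u := by
    rw [hyT, heq2, map_add, map_add, map_smul]
    push_cast
    rw [hPSx, hPSw, hPSu, zero_add]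
  have hmain : β₁ • rx + v₁ = β₂ • rx + M u := by
    rw [← heq1, hproj_ry, hkey]
  by_contra hne
  apply hrxU'
  have h3 : (β₁ - β₂) • rx = M u - v₁ := by
    rw [sub_smul]
    have := hmain
    rw [← sub_eq_iff_eq_add'] at this
    linear_combination (norm := module) hmain
  have h4 : (β₁ - β₂) • rx ∈ U' := h3 ▸ Submodule.sub_mem _ hMuU' hv₁
  have h5 : rx = (β₁ - β₂)⁻¹ • ((β₁ - β₂) • rx) :=
    (inv_smul_smul₀ (sub_ne_zero.mpr hne) rx).symm
  rw [h5]
  exact Submodule.smul_mem _ _ h4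
end

section
/- (Omitted variable bias formula.) Let E be a finite-dimensional real inner product space and let x, u, y ∈ E with x and u linearly independent. Then β_{x.y} − β_{x.y|span{u}} = β_{u.y|span{x}} · β_{x.u}, where β_{x.y} = ⟪x,y⟫/‖x‖² and β_{x.u} = ⟪x,u⟫/‖x‖² are simple least-squares regression coefficients, β_{x.y|span{u}} is the least-squares slope coefficient of x in the regression of y onto span{x,u}, and β_{u.y|span{x}} is the least-squares slope coefficient of u in the regression of y onto span{x,u}. -/
open RealInnerProductSpace

/-- Omitted variable bias formula: `β_{x.y} − β_{x.y|u} = β_{u.y|x} · β_{x.u}`. -/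
theorem stmt_8 {E : Type*} [NormedAddCommGroup E] [InnerProductSpace ℝ E]
    [FiniteDimensional ℝ E] (x u y : E) (hxu : LinearIndependent ℝ ![x, u]) :
    ∀ β₁ β₂ : ℝ,
      (∃ v ∈ Submodule.span ℝ {u},
        (Submodule.orthogonalProjectionOnto (Submodule.span ℝ {x} ⊔ Submodule.span ℝ {u}) y : E)
          = β₁ • x + v) →
      (∃ v ∈ Submodule.span ℝ {x},
        (Submodule.orthogonalProjectionOnto (Submodule.span ℝ {u} ⊔ Submodule.span ℝ {x}) y : E)
          = β₂ • u + v) →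
      ⟪x, y⟫ / ‖x‖ ^ 2 - β₁ = β₂ * (⟪x, u⟫ / ‖x‖ ^ 2) := by
  intro β₁ β₂ h₁ h₂
  obtain ⟨v, hv, hv1⟩ := h₁
  obtain ⟨w, hw, hw1⟩ := h₂
  obtain ⟨c, rfl⟩ := Submodule.mem_span_singleton.mp hv
  obtain ⟨d, rfl⟩ := Submodule.mem_span_singleton.mp hw
  rw [show ((Submodule.orthogonalProjectionOnto (Submodule.span ℝ {u} ⊔ Submodule.span ℝ {x}) y : E))
      = (Submodule.orthogonalProjectionOnto (Submodule.span ℝ {x} ⊔ Submodule.span ℝ {u}) y : E) from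
    congrArg (fun K : Submodule ℝ E => (Submodule.orthogonalProjectionOnto K y : E)) (sup_comm _ _)] at hw1
  have heq : β₁ • x + c • u = β₂ • u + d • x := by rw [← hv1, ← hw1]
  have h0 : (β₁ - d) • x + (c - β₂) • u = 0 := by
    rw [sub_smul, sub_smul]
    rw [show β₁ • x - d • x + (c • u - β₂ • u)
        = (β₁ • x + c • u) - (β₂ • u + d • x) by abel, heq, sub_self]
  have hc : c = β₂ := by
    have := (LinearIndependent.pair_iff.mp hxu) _ _ h0
    linarith [this.2]
  subst hc
  have hx0 : x ≠ 0 := fun h => hxu.ne_zero 0 (by simp [h])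
  set W := Submodule.span ℝ {x} ⊔ Submodule.span ℝ {u} with hW
  have hxW : x ∈ W := Submodule.mem_sup_left (Submodule.mem_span_singleton_self x)
  have horth : ⟪x, y - (Submodule.orthogonalProjectionOnto W y : E)⟫ = 0 :=
    (Submodule.mem_orthogonal W _).mp
      (Submodule.sub_starProjection_mem_orthogonal (K := W) y) x hxW
  rw [inner_sub_right, hv1, inner_add_right, inner_smul_right, inner_smul_right,
    real_inner_self_eq_norm_sq] at horth
  have hnx : ‖x‖ ^ 2 ≠ 0 := pow_ne_zero 2 (norm_ne_zero_iff.mpr hx0)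
  field_simp
  linarith [horth]
end

section
/- (Adjusted slope formula.) Let E be a finite-dimensional real inner product space, let U be a subspace of E, and let x, y ∈ E with x ∉ U, y ≠ 0, and P_U x ≠ 0. Then the least-squares slope coefficient of x in the regression of y onto span{x} ⊔ U satisfies β_{x.y|U} = (‖y‖/‖x‖) · ( ρ(x,y) − ρ(P_U x, x)·ρ(P_U x, y) ) / ( 1 − ρ(P_U x, x)² ), where ρ(a,b) = ⟪a,b⟫/(‖a‖‖b‖). -/
open RealInnerProductSpace

/-- Pearson's correlation of two vectors. -/
noncomputable def pearson {E : Type*} [NormedAddCommGroup E] [InnerProductSpace ℝ E]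
    (a b : E) : ℝ := ⟪a, b⟫ / (‖a‖ * ‖b‖)

/-- Adjusted slope formula. -/
theorem stmt_9 {E : Type*} [NormedAddCommGroup E] [InnerProductSpace ℝ E]
    [FiniteDimensional ℝ E] (U : Submodule ℝ E) (x y : E) (hx : x ∉ U) (hy : y ≠ 0)
    (hPx : (Submodule.orthogonalProjection U x : E) ≠ 0) :
    ∀ β : ℝ,
      (∃ v ∈ U, (Submodule.orthogonalProjection (Submodule.span ℝ {x} ⊔ U) y : E) = β • x + v) →
      β = (‖y‖ / ‖x‖) *
          (pearson x y -
            pearson (Submodule.orthogonalProjection U x : E) x * pearson (Submodule.orthogonalProjection U x : E) y) /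
          (1 - pearson (Submodule.orthogonalProjection U x : E) x ^ 2) := by
  rintro β ⟨v, hv, heq⟩
  set p : E := (Submodule.orthogonalProjection U x : E) with hp
  set w : E := x - p with hwdef
  have hpU : p ∈ U := (Submodule.orthogonalProjection U x).2
  have hwperp : w ∈ Uᗮ := Submodule.sub_starProjection_mem_orthogonal (K := U) x
  have hx0 : x ≠ 0 := by rintro rfl; exact hPx (by rw [hp, map_zero]; rfl)
  have hnx : ‖x‖ ≠ 0 := norm_ne_zero_iff.mpr hx0
  have hny : ‖y‖ ≠ 0 := norm_ne_zero_iff.mpr hy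
  have hnp : ‖p‖ ≠ 0 := norm_ne_zero_iff.mpr hPx
  have hw0 : w ≠ 0 := by
    intro h
    apply hx
    have : x = p := by rwa [hwdef, sub_eq_zero] at h
    rw [this]; exact hpU
  have hpx : ⟪p, x⟫ = ‖p‖ ^ 2 := by
    have h1 : ⟪p, w⟫ = 0 := (Submodule.mem_orthogonal _ _).1 hwperp p hpU
    have : ⟪p, x⟫ = ⟪p, p⟫ + ⟪p, w⟫ := by
      rw [hwdef]; rw [inner_sub_right]; ring
    rw [this, h1, real_inner_self_eq_norm_sq]; ring
  have hwx : ⟪w, x⟫ = ‖x‖ ^ 2 - ‖p‖ ^ 2 := by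
    rw [hwdef, inner_sub_left, hpx, real_inner_self_eq_norm_sq]
  have hwnorm : ‖x‖ ^ 2 - ‖p‖ ^ 2 = ‖w‖ ^ 2 := by
    have := hwx
    rw [hwdef, ← real_inner_self_eq_norm_sq (x - p)] at *
    rw [inner_sub_right, inner_sub_left, inner_sub_left, real_inner_comm p x] at *
    rw [real_inner_self_eq_norm_sq, real_inner_self_eq_norm_sq] at *
    linarith [hpx]
  have hden : ‖x‖ ^ 2 - ‖p‖ ^ 2 ≠ 0 := by
    rw [hwnorm]
    exact pow_ne_zero 2 (norm_ne_zero_iff.mpr hw0)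
  -- w is in the big subspace S
  set S := Submodule.span ℝ {x} ⊔ U with hS
  have hxS : x ∈ S := Submodule.mem_sup_left (Submodule.mem_span_singleton_self x)
  have hwS : w ∈ S := Submodule.sub_mem S hxS (Submodule.mem_sup_right hpU)
  have hkey : ⟪w, y⟫ = ⟪w, (Submodule.orthogonalProjection S y : E)⟫ := by
    have hperp : y - (Submodule.orthogonalProjection S y : E) ∈ Sᗮ :=
      Submodule.sub_starProjection_mem_orthogonal (K := S) y
    have h0 : ⟪w, y - (Submodule.orthogonalProjection S y : E)⟫ = 0 :=
      (Submodule.mem_orthogonal _ _).1 hperp w hwS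
    rw [inner_sub_right] at h0
    linarith
  have hwv : ⟪w, v⟫ = 0 := (Submodule.mem_orthogonal' _ _).1 hwperp v hv
  have hmain : ⟪w, y⟫ = β * (‖x‖ ^ 2 - ‖p‖ ^ 2) := by
    rw [hkey, heq, inner_add_right, real_inner_smul_right, hwv, hwx]; ring
  have hwy : ⟪w, y⟫ = ⟪x, y⟫ - ⟪p, y⟫ := by
    rw [hwdef, inner_sub_left]
  have hβ : β = (⟪x, y⟫ - ⟪p, y⟫) / (‖x‖ ^ 2 - ‖p‖ ^ 2) := by
    rw [← hwy, hmain]; field_simp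
  rw [hβ]
  simp only [pearson]
  rw [hpx]
  have e1 : ‖p‖^2/(‖p‖*‖x‖) = ‖p‖/‖x‖ := by
    rw [pow_two, mul_div_mul_left _ _ hnp]
  rw [e1]
  have e3 : ‖y‖/‖x‖ * (⟪x,y⟫/(‖x‖*‖y‖) - ‖p‖/‖x‖ * (⟪p,y⟫/(‖p‖*‖y‖)))
      = (⟪x,y⟫-⟪p,y⟫)/‖x‖^2 := by
    field_simp
  rw [e3]
  have e2 : (1:ℝ) - (‖p‖/‖x‖)^2 = (‖x‖^2-‖p‖^2)/‖x‖^2 := by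
    field_simp
  rw [e2]
  rw [div_div_div_cancel_right₀]
  exact pow_ne_zero 2 hnx
end

section
/- (Residualized adjusted slope formula.) Let E be a finite-dimensional real inner product space, let W and U be subspaces of E, and let x, y ∈ E with x ∉ W ⊔ U and y ∉ W. Let r_x = x − P_W x, r_y = y − P_W y, and U' = (id − P_W)(U), and assume P_{U'} r_x ≠ 0 and P_{U'} r_y ≠ 0. Then β_{x.y|W⊔U} = (‖r_y‖/‖r_x‖) · ( ρ(r_x, r_y) − R_{U'; r_x} · R_{U'; r_y} · ρ(P_{U'} r_x, P_{U'} r_y) ) / ( 1 − R²_{U'; r_x} ), where R_{U'; v} = ‖P_{U'} v‖/‖v‖, R²_{U'; v} = ‖P_{U'} v‖²/‖v‖², ρ(a,b) = ⟪a,b⟫/(‖a‖‖b‖), and β_{x.y|W⊔U} is the least-squares slope coefficient of x in the regression of y onto span{x} ⊔ (W ⊔ U). -/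
open RealInnerProductSpace

/-- Residualized adjusted slope formula. -/
theorem stmt_10 {E : Type*} [NormedAddCommGroup E] [InnerProductSpace ℝ E]
    [FiniteDimensional ℝ E] (W U : Submodule ℝ E) (x y : E)
    (hx : x ∉ W ⊔ U) (hy : y ∉ W)
    (rx ry : E)
    (hrx : rx = x - (Submodule.orthogonalProjectionOnto W x : E))
    (hry : ry = y - (Submodule.orthogonalProjectionOnto W y : E))
    (U' : Submodule ℝ E)
    (hU' : U' = U.map (LinearMap.id - W.subtype ∘ₗ (Submodule.orthogonalProjectionOnto W).toLinearMap))
    (hPrx : (Submodule.orthogonalProjectionOnto U' rx : E) ≠ 0)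
    (hPry : (Submodule.orthogonalProjectionOnto U' ry : E) ≠ 0) :
    ∀ β : ℝ,
      (∃ v ∈ W ⊔ U,
        (Submodule.orthogonalProjectionOnto (Submodule.span ℝ {x} ⊔ (W ⊔ U)) y : E) = β • x + v) →
      β = (‖ry‖ / ‖rx‖) *
          (pearson rx ry -
            (‖(Submodule.orthogonalProjectionOnto U' rx : E)‖ / ‖rx‖) *
              (‖(Submodule.orthogonalProjectionOnto U' ry : E)‖ / ‖ry‖) *
              pearson (Submodule.orthogonalProjectionOnto U' rx : E) (Submodule.orthogonalProjectionOnto U' ry : E)) /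
          (1 - ‖(Submodule.orthogonalProjectionOnto U' rx : E)‖ ^ 2 / ‖rx‖ ^ 2) := by
  rintro β ⟨v, hv, hproj⟩
  set V : Submodule ℝ E := W ⊔ U with hV
  set S : Submodule ℝ E := Submodule.span ℝ {x} ⊔ V with hS
  set Prx : E := (Submodule.orthogonalProjectionOnto U' rx : E) with hPrxdef
  set Pry : E := (Submodule.orthogonalProjectionOnto U' ry : E) with hPrydef
  set r : E := x - (Submodule.orthogonalProjectionOnto V x : E) with hr
  have hrV : r ∈ Vᗮ := Submodule.sub_starProjection_mem_orthogonal x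
  have hrVinner : ∀ w ∈ V, ⟪r, w⟫ = 0 := fun w hw =>
    (Submodule.mem_orthogonal' V r).1 hrV w hw
  have hrS : r ∈ S :=
    Submodule.sub_mem _ (Submodule.mem_sup_left (Submodule.mem_span_singleton_self x))
      (Submodule.mem_sup_right (Submodule.orthogonalProjectionOnto V x).2)
  have hrne : r ≠ 0 := by
    intro h
    apply hx
    rw [sub_eq_zero] at h
    rw [h]
    exact (Submodule.orthogonalProjectionOnto V x).2
  -- U' facts
  have hU'mem : ∀ u ∈ U, u - (Submodule.orthogonalProjectionOnto W u : E) ∈ U' := by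
    intro u hu
    rw [hU']
    exact ⟨u, hu, by simp⟩
  have hU'leWperp : U' ≤ Wᗮ := by
    rw [hU']
    rintro _ ⟨u, hu, rfl⟩
    simpa using Submodule.sub_starProjection_mem_orthogonal (K := W) u
  have hU'leV : U' ≤ V := by
    rw [hU']
    rintro _ ⟨u, hu, rfl⟩
    simp only [LinearMap.sub_apply, LinearMap.id_apply, LinearMap.coe_comp,
      Function.comp_apply, Submodule.coe_subtype, ContinuousLinearMap.coe_coe]
    exact Submodule.sub_mem _ (Submodule.mem_sup_right hu)
      (Submodule.mem_sup_left (Submodule.orthogonalProjectionOnto W u).2)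
  have hrxWperp : rx ∈ Wᗮ := by rw [hrx]; exact Submodule.sub_starProjection_mem_orthogonal x
  have hryWperp : ry ∈ Wᗮ := by rw [hry]; exact Submodule.sub_starProjection_mem_orthogonal y
  have hdWperp : rx - Prx ∈ Wᗮ :=
    Submodule.sub_mem _ hrxWperp (hU'leWperp (Submodule.orthogonalProjectionOnto U' rx).2)
  have hdU'perp : rx - Prx ∈ U'ᗮ := Submodule.sub_starProjection_mem_orthogonal rx
  -- projection of x onto V
  have hPx : (Submodule.orthogonalProjectionOnto V x : E) = (Submodule.orthogonalProjectionOnto W x : E) + Prx := by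
    apply Submodule.eq_starProjection_of_mem_of_inner_eq_zero
    · exact Submodule.add_mem _ (Submodule.mem_sup_left (Submodule.orthogonalProjectionOnto W x).2)
        (hU'leV (Submodule.orthogonalProjectionOnto U' rx).2)
    · intro w hw
      have hxsub : x - ((Submodule.orthogonalProjectionOnto W x : E) + Prx) = rx - Prx := by
        rw [hrx]; abel
      rw [hxsub]
      rcases Submodule.mem_sup.1 hw with ⟨w1, hw1, w2, hw2, rfl⟩
      have h1 : ⟪rx - Prx, w1⟫ = 0 := (Submodule.mem_orthogonal' _ _).1 hdWperp w1 hw1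
      have h2 : ⟪rx - Prx, w2⟫ = 0 := by
        have hw2' : w2 = (Submodule.orthogonalProjectionOnto W w2 : E) +
            (w2 - (Submodule.orthogonalProjectionOnto W w2 : E)) := by abel
        rw [hw2', inner_add_right,
          (Submodule.mem_orthogonal' _ _).1 hdWperp _ (Submodule.orthogonalProjectionOnto W w2).2,
          (Submodule.mem_orthogonal' _ _).1 hdU'perp _ (hU'mem w2 hw2), add_zero]
      rw [inner_add_right, h1, h2, add_zero]
  have hrr : r = rx - Prx := by rw [hr, hPx, hrx]; abel
  -- β equation
  have hrxinner : ⟪r, x⟫ = ‖r‖ ^ 2 := by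
    have hx' : x = r + (Submodule.orthogonalProjectionOnto V x : E) := by rw [hr]; abel
    nth_rewrite 1 [hx']
    rw [inner_add_right, hrVinner _ (Submodule.orthogonalProjectionOnto V x).2, add_zero,
      real_inner_self_eq_norm_sq]
  have hβ : β * ‖r‖ ^ 2 = ⟪r, y⟫ := by
    have h1 : ⟪r, y⟫ = ⟪r, (Submodule.orthogonalProjectionOnto S y : E)⟫ := by
      have h0 : ⟪y - (Submodule.orthogonalProjectionOnto S y : E), r⟫ = 0 :=
        Submodule.starProjection_inner_eq_zero y r hrS
      rw [inner_sub_left] at h0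
      have e1 := real_inner_comm y r
      have e2 := real_inner_comm ((Submodule.orthogonalProjectionOnto S y : E)) r
      linarith
    rw [h1, hproj, inner_add_right, inner_smul_right, hrxinner, hrVinner v hv, add_zero]
  -- inner product computations
  have hPrxsq : ⟪rx, Prx⟫ = ‖Prx‖ ^ 2 := by
    have : rx = (rx - Prx) + Prx := by abel
    nth_rewrite 1 [this]
    rw [inner_add_left, (Submodule.mem_orthogonal' _ _).1 hdU'perp _
      (Submodule.orthogonalProjectionOnto U' rx).2, zero_add, real_inner_self_eq_norm_sq]
  have hnr : ‖r‖ ^ 2 = ‖rx‖ ^ 2 - ‖Prx‖ ^ 2 := by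
    rw [← real_inner_self_eq_norm_sq, hrr, inner_sub_sub_self, hPrxsq,
      real_inner_self_eq_norm_sq, real_inner_self_eq_norm_sq]
    linarith [real_inner_comm Prx rx, hPrxsq]
  have hry' : ⟪r, y⟫ = ⟪rx, ry⟫ - ⟪Prx, Pry⟫ := by
    have hy' : y = ry + (Submodule.orthogonalProjectionOnto W y : E) := by rw [hry]; abel
    have hrW : r ∈ Wᗮ := by rw [hrr]; exact hdWperp
    have h1 : ⟪r, (Submodule.orthogonalProjectionOnto W y : E)⟫ =
        0 := (Submodule.mem_orthogonal' _ _).1 hrW _ (Submodule.orthogonalProjectionOnto W y).2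
    have h2 : ⟪Prx, ry - Pry⟫ = 0 :=
      (Submodule.mem_orthogonal _ _).1 (Submodule.sub_starProjection_mem_orthogonal ry) Prx
        (Submodule.orthogonalProjectionOnto U' rx).2
    nth_rewrite 1 [hy']
    rw [inner_add_right, h1, add_zero, hrr, inner_sub_left]
    rw [inner_sub_right] at h2
    linarith
  -- nonvanishing
  have hrxne : rx ≠ 0 := by
    intro h
    apply hx
    rw [hrx, sub_eq_zero] at h
    exact Submodule.mem_sup_left (h ▸ (Submodule.orthogonalProjectionOnto W x).2)
  have hryne : ry ≠ 0 := by
    intro h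
    apply hy
    rw [hry, sub_eq_zero] at h
    exact h ▸ (Submodule.orthogonalProjectionOnto W y).2
  have hnx : ‖rx‖ ≠ 0 := norm_ne_zero_iff.2 hrxne
  have hny : ‖ry‖ ≠ 0 := norm_ne_zero_iff.2 hryne
  have hpx : ‖Prx‖ ≠ 0 := norm_ne_zero_iff.2 hPrx
  have hpy : ‖Pry‖ ≠ 0 := norm_ne_zero_iff.2 hPry
  have hnrne : ‖r‖ ^ 2 ≠ 0 := pow_ne_zero 2 (norm_ne_zero_iff.2 hrne)
  have hdenom : ‖rx‖ ^ 2 - ‖Prx‖ ^ 2 ≠ 0 := hnr ▸ hnrne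
  -- final algebra
  rw [hnr, hry'] at hβ
  have hβ' : β = (⟪rx, ry⟫ - ⟪Prx, Pry⟫) / (‖rx‖ ^ 2 - ‖Prx‖ ^ 2) := by
    rw [eq_div_iff hdenom]
    linarith
  rw [hβ', pearson, pearson]
  field_simp
end

section
/- (Squared omitted-variable bias in terms of partial correlations.) Let E be a finite-dimensional real inner product space, let W be a subspace of E, and let x, u, y ∈ E with x ∉ W and u ∉ span{x} ⊔ W. Write X = span{x} ⊔ W, r(v;V) = v − P_V v for any vector v and subspace V, and assume r(y;X) ≠ 0, r(u;X) ≠ 0, r(u;W) ≠ 0, and ρ(r(x;W), r(u;W))² ≠ 1. Then ( β_{x.y|W} − β_{x.y|W ⊔ span{u}} )² = [ ρ(r(y;X), r(u;X))² · ρ(r(x;W), r(u;W))² / ( 1 − ρ(r(x;W), r(u;W))² ) ] · ‖r(y;X)‖² / ‖r(x;W)‖², where ρ(a,b) = ⟪a,b⟫/(‖a‖‖b‖), β_{x.y|W} is the least-squares slope coefficient of x in the regression of y onto span{x} ⊔ W, and β_{x.y|W ⊔ span{u}} is the least-squares slope coefficient of x in the regression of y onto span{x} ⊔ W ⊔ span{u}.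 -/
open RealInnerProductSpace

lemma projA {E : Type*} [NormedAddCommGroup E] [InnerProductSpace ℝ E]
    [FiniteDimensional ℝ E] (V : Submodule ℝ E) (z b : E)
    (hz : z - (Submodule.orthogonalProjection V z : E) ≠ 0) :
    (Submodule.orthogonalProjection (Submodule.span ℝ {z} ⊔ V) b : E) =
      (Submodule.orthogonalProjection V b : E) +
        (⟪z - (Submodule.orthogonalProjection V z : E), b⟫ /
          ‖z - (Submodule.orthogonalProjection V z : E)‖ ^ 2) •
          (z - (Submodule.orthogonalProjection V z : E)) := by
  set rz := z - (Submodule.orthogonalProjection V z : E) with hrzdef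
  set c : ℝ := ⟪rz, b⟫ / ‖rz‖ ^ 2 with hc
  have hrzV : rz ∈ Vᗮ := Submodule.sub_starProjection_mem_orthogonal z
  have hbV : b - (Submodule.orthogonalProjection V b : E) ∈ Vᗮ :=
    Submodule.sub_starProjection_mem_orthogonal b
  have hn : ‖rz‖ ^ 2 ≠ 0 := pow_ne_zero _ (norm_ne_zero_iff.2 hz)
  have hcn : c * ‖rz‖ ^ 2 = ⟪rz, b⟫ := div_mul_cancel₀ _ hn
  apply Submodule.eq_starProjection_of_mem_of_inner_eq_zero
  · refine Submodule.mem_sup.2 ⟨c • z,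
      Submodule.smul_mem _ _ (Submodule.mem_span_singleton_self z),
      (Submodule.orthogonalProjection V b : E) - c • (Submodule.orthogonalProjection V z : E),
      Submodule.sub_mem _ (Submodule.coe_mem _)
        (Submodule.smul_mem _ _ (Submodule.coe_mem _)), ?_⟩
    rw [hrzdef]; rw [smul_sub]; abel
  · intro w hw
    obtain ⟨s, hs, v', hv', rfl⟩ := Submodule.mem_sup.1 hw
    obtain ⟨t, rfl⟩ := Submodule.mem_span_singleton.1 hs
    have hv'z : ⟪rz, v'⟫ = 0 :=
      Submodule.inner_left_of_mem_orthogonal hv' hrzV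
    have hbv' : ⟪b - (Submodule.orthogonalProjection V b : E), v'⟫ = 0 :=
      Submodule.inner_left_of_mem_orthogonal hv' hbV
    have hPbrz : ⟪(Submodule.orthogonalProjection V b : E), rz⟫ = 0 :=
      Submodule.inner_right_of_mem_orthogonal (Submodule.coe_mem _) hrzV
    have hPzrz : ⟪b - ((Submodule.orthogonalProjection V b : E) + c • rz),
        (Submodule.orthogonalProjection V z : E)⟫ = 0 := by
      have h1 : ⟪b - (Submodule.orthogonalProjection V b : E), (Submodule.orthogonalProjection V z : E)⟫ = 0 :=
        Submodule.inner_left_of_mem_orthogonal (Submodule.coe_mem _) hbV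
      have h2 : ⟪rz, (Submodule.orthogonalProjection V z : E)⟫ = 0 :=
        Submodule.inner_left_of_mem_orthogonal (Submodule.coe_mem _) hrzV
      have : b - ((Submodule.orthogonalProjection V b : E) + c • rz)
          = (b - (Submodule.orthogonalProjection V b : E)) - c • rz := by abel
      rw [this, inner_sub_left, h1, real_inner_smul_left, h2]; ring
    have hz' : ⟪b - ((Submodule.orthogonalProjection V b : E) + c • rz), z⟫ = 0 := by
      have hzdecomp : z = rz + (Submodule.orthogonalProjection V z : E) := by rw [hrzdef]; abel
      rw [hzdecomp, inner_add_right, hPzrz]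
      have : b - ((Submodule.orthogonalProjection V b : E) + c • rz)
          = (b - (Submodule.orthogonalProjection V b : E)) - c • rz := by abel
      rw [this, inner_sub_left, real_inner_smul_left, real_inner_self_eq_norm_sq,
        inner_sub_left, hPbrz, hcn, real_inner_comm]
      ring
    have hvz : ⟪b - ((Submodule.orthogonalProjection V b : E) + c • rz), v'⟫ = 0 := by
      have : b - ((Submodule.orthogonalProjection V b : E) + c • rz)
          = (b - (Submodule.orthogonalProjection V b : E)) - c • rz := by abel
      rw [this, inner_sub_left, hbv', real_inner_smul_left, hv'z]; ring
    rw [inner_add_right, hvz, real_inner_smul_right, hz']; ring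

lemma proj_congr {E : Type*} [NormedAddCommGroup E] [InnerProductSpace ℝ E]
    [FiniteDimensional ℝ E] {K K' : Submodule ℝ E} (h : K = K') (v : E) :
    (Submodule.orthogonalProjection K v : E) = (Submodule.orthogonalProjection K' v : E) := by
  subst h; rfl

lemma smul_cancel_mem {E : Type*} [NormedAddCommGroup E] [InnerProductSpace ℝ E]
    {a : ℝ} {x : E} {W : Submodule ℝ E} (h : a • x ∈ W) (hx : x ∉ W) : a = 0 := by
  by_contra ha
  exact hx (by simpa [smul_smul, inv_mul_cancel₀ ha] using Submodule.smul_mem W a⁻¹ h)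

/-- Squared omitted-variable bias in terms of partial correlations. -/
theorem stmt_11 {E : Type*} [NormedAddCommGroup E] [InnerProductSpace ℝ E]
    [FiniteDimensional ℝ E] (W : Submodule ℝ E) (x u y : E)
    (hx : x ∉ W) (hu : u ∉ Submodule.span ℝ {x} ⊔ W)
    (X : Submodule ℝ E) (hX : X = Submodule.span ℝ {x} ⊔ W)
    (ryX ruX rxW ruW : E)
    (hryX : ryX = y - (Submodule.orthogonalProjection X y : E))
    (hruX : ruX = u - (Submodule.orthogonalProjection X u : E))
    (hrxW : rxW = x - (Submodule.orthogonalProjection W x : E))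
    (hruW : ruW = u - (Submodule.orthogonalProjection W u : E))
    (hryX0 : ryX ≠ 0) (hruX0 : ruX ≠ 0) (hruW0 : ruW ≠ 0)
    (hrho : pearson rxW ruW ^ 2 ≠ 1) :
    ∀ β₁ β₂ : ℝ,
      (∃ v ∈ W, (Submodule.orthogonalProjection (Submodule.span ℝ {x} ⊔ W) y : E) = β₁ • x + v) →
      (∃ v ∈ W ⊔ Submodule.span ℝ {u},
        (Submodule.orthogonalProjection (Submodule.span ℝ {x} ⊔ (W ⊔ Submodule.span ℝ {u})) y : E)
          = β₂ • x + v) →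
      (β₁ - β₂) ^ 2 =
        (pearson ryX ruX ^ 2 * pearson rxW ruW ^ 2 / (1 - pearson rxW ruW ^ 2)) *
          ‖ryX‖ ^ 2 / ‖rxW‖ ^ 2 := by
  intro β₁ β₂ hb1 hb2
  obtain ⟨v₁, hv₁, he₁⟩ := hb1
  obtain ⟨v₂, hv₂, he₂⟩ := hb2
  -- basic nonvanishing
  have hrxW0 : rxW ≠ 0 := by
    rw [hrxW, sub_ne_zero]
    intro h
    exact hx (Submodule.starProjection_eq_self_iff.1 h.symm)
  have h0 : x - (Submodule.orthogonalProjection W x : E) ≠ 0 := hrxW ▸ hrxW0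
  have hu0 : u - (Submodule.orthogonalProjection X u : E) ≠ 0 := hruX ▸ hruX0
  -- projection formulas
  have hPy := projA W x y h0
  rw [← hrxW] at hPy
  have hPu := projA W x u h0
  rw [← hrxW] at hPu
  set c₁ : ℝ := ⟪rxW, y⟫ / ‖rxW‖ ^ 2 with hc₁
  set d : ℝ := ⟪rxW, u⟫ / ‖rxW‖ ^ 2 with hd
  have hPlong := projA X u y hu0
  rw [← hruX] at hPlong
  set c₂ : ℝ := ⟪ruX, y⟫ / ‖ruX‖ ^ 2 with hc₂
  -- identify β₁
  have he₁' : (Submodule.orthogonalProjection X y : E) = β₁ • x + v₁ := by rw [hX]; exact he₁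
  have hXy : (Submodule.orthogonalProjection X y : E)
      = (Submodule.orthogonalProjection W y : E) + c₁ • rxW := by rw [hX]; exact hPy
  have hβ₁ : β₁ = c₁ := by
    have e : β₁ • x + v₁
        = (Submodule.orthogonalProjection W y : E) + c₁ • (x - (Submodule.orthogonalProjection W x : E)) := by
      rw [← he₁', hXy, hrxW]
    have e2 : (β₁ - c₁) • x
          - (((Submodule.orthogonalProjection W y : E) - c₁ • (Submodule.orthogonalProjection W x : E)) - v₁)
        = (β₁ • x + v₁)
          - ((Submodule.orthogonalProjection W y : E) + c₁ • (x - (Submodule.orthogonalProjection W x : E))) := by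
      module
    rw [e, sub_self, sub_eq_zero] at e2
    have hmem : (β₁ - c₁) • x ∈ W := by
      rw [e2]
      exact Submodule.sub_mem _ (Submodule.sub_mem _ (Submodule.coe_mem _)
        (Submodule.smul_mem _ _ (Submodule.coe_mem _))) hv₁
    have := smul_cancel_mem hmem hx
    linarith
  -- x not in W ⊔ span u
  have hxW' : x ∉ W ⊔ Submodule.span ℝ {u} := by
    intro h
    obtain ⟨w, hw, s, hs, heq⟩ := Submodule.mem_sup.1 h
    obtain ⟨t, rfl⟩ := Submodule.mem_span_singleton.1 hs
    rcases eq_or_ne t 0 with ht | ht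
    · rw [ht, zero_smul, add_zero] at heq
      exact hx (heq ▸ hw)
    · apply hu
      have hxm : x - w ∈ Submodule.span ℝ {x} ⊔ W :=
        Submodule.sub_mem _ (Submodule.mem_sup_left (Submodule.mem_span_singleton_self x))
          (Submodule.mem_sup_right hw)
      have hux : u = t⁻¹ • (x - w) := by
        rw [show x - w = t • u by rw [← heq]; abel, smul_smul, inv_mul_cancel₀ ht, one_smul]
      rw [hux]
      exact Submodule.smul_mem _ _ hxm
  -- identify β₂
  have big : Submodule.span ℝ {x} ⊔ (W ⊔ Submodule.span ℝ {u})
      = Submodule.span ℝ {u} ⊔ X := by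
    rw [hX, sup_comm W (Submodule.span ℝ {u}), sup_left_comm]
  have hproj_congr : (Submodule.orthogonalProjection (Submodule.span ℝ {u} ⊔ X) y : E)
      = (Submodule.orthogonalProjection (Submodule.span ℝ {x} ⊔ (W ⊔ Submodule.span ℝ {u})) y : E) :=
    proj_congr big.symm y
  have hPu' : (Submodule.orthogonalProjection X u : E)
      = (Submodule.orthogonalProjection W u : E) + d • rxW := by rw [hX]; exact hPu
  have hruX_x : ruX = u - (Submodule.orthogonalProjection W u : E)
      - d • (x - (Submodule.orthogonalProjection W x : E)) := by
    rw [hruX, hPu', hrxW]; abel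
  have hβ₂ : β₂ = β₁ - c₂ * d := by
    have e : β₂ • x + v₂ = β₁ • x + v₁ + c₂ • ruX := by
      rw [← he₂, ← hproj_congr, hPlong, he₁']
    rw [hruX_x] at e
    have e2 : (β₂ - (β₁ - c₂ * d)) • x
          - ((v₁ - v₂) + c₂ • u - c₂ • (Submodule.orthogonalProjection W u : E)
            + (c₂ * d) • (Submodule.orthogonalProjection W x : E))
        = (β₂ • x + v₂) - (β₁ • x + v₁
            + c₂ • (u - (Submodule.orthogonalProjection W u : E)
              - d • (x - (Submodule.orthogonalProjection W x : E)))) := by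
      module
    rw [e, sub_self, sub_eq_zero] at e2
    have hmem : (β₂ - (β₁ - c₂ * d)) • x ∈ W ⊔ Submodule.span ℝ {u} := by
      rw [e2]
      refine Submodule.add_mem _ (Submodule.sub_mem _ (Submodule.add_mem _
        (Submodule.sub_mem _ (Submodule.mem_sup_left hv₁) hv₂)
        (Submodule.mem_sup_right (Submodule.smul_mem _ _
          (Submodule.mem_span_singleton_self u))))
        (Submodule.mem_sup_left (Submodule.smul_mem _ _ (Submodule.coe_mem _))))
        (Submodule.mem_sup_left (Submodule.smul_mem _ _ (Submodule.coe_mem _)))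
    have := smul_cancel_mem hmem hxW'
    linarith
  -- inner-product identities
  have hruXperp : ruX ∈ Xᗮ := hruX ▸ Submodule.sub_starProjection_mem_orthogonal u
  have hiy : ⟪ruX, y⟫ = ⟪ruX, ryX⟫ := by
    rw [hryX, inner_sub_right,
      Submodule.inner_left_of_mem_orthogonal (Submodule.coe_mem _) hruXperp, sub_zero]
  have hrxWperp : rxW ∈ Wᗮ := hrxW ▸ Submodule.sub_starProjection_mem_orthogonal x
  have hiu : ⟪rxW, u⟫ = ⟪rxW, ruW⟫ := by
    rw [hruW, inner_sub_right,
      Submodule.inner_left_of_mem_orthogonal (Submodule.coe_mem _) hrxWperp, sub_zero]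
  -- Pythagoras
  have hrxWX : rxW ∈ X := by
    rw [hrxW, hX]
    exact Submodule.sub_mem _
      (Submodule.mem_sup_left (Submodule.mem_span_singleton_self x))
      (Submodule.mem_sup_right (Submodule.coe_mem _))
  have hperp : ⟪ruX, rxW⟫ = 0 :=
    Submodule.inner_left_of_mem_orthogonal hrxWX hruXperp
  have hruW_eq : ruW = ruX + d • rxW := by
    rw [hruX_x, hruW, hrxW]; abel
  have hpyth : ‖ruW‖ ^ 2 = ‖ruX‖ ^ 2 + d ^ 2 * ‖rxW‖ ^ 2 := by
    rw [hruW_eq, norm_add_sq_real, real_inner_smul_right, hperp, norm_smul]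
    simp [mul_pow, sq_abs]
  -- final algebra
  have nrx : ‖rxW‖ ≠ 0 := norm_ne_zero_iff.2 hrxW0
  have nru : ‖ruW‖ ≠ 0 := norm_ne_zero_iff.2 hruW0
  have nry : ‖ryX‖ ≠ 0 := norm_ne_zero_iff.2 hryX0
  have nrux : ‖ruX‖ ≠ 0 := norm_ne_zero_iff.2 hruX0
  have hβdiff : β₁ - β₂ = c₂ * d := by rw [hβ₂]; ring
  rw [hβdiff, hc₂, hd, hiy, hiu]
  simp only [pearson]
  have hrs : 1 - (⟪rxW, ruW⟫ / (‖rxW‖ * ‖ruW‖)) ^ 2 = ‖ruX‖ ^ 2 / ‖ruW‖ ^ 2 := by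
    have hdval : d = ⟪rxW, ruW⟫ / ‖rxW‖ ^ 2 := by rw [hd, hiu]
    rw [hdval] at hpyth
    field_simp at hpyth
    have hr2 : ‖rxW‖ ^ 2 ≠ 0 := pow_ne_zero _ nrx
    have hp2 : ‖ruW‖ ^ 2 * ‖rxW‖ ^ 2 = ‖ruX‖ ^ 2 * ‖rxW‖ ^ 2 + ⟪rxW, ruW⟫ ^ 2 := by
      apply mul_right_cancel₀ hr2
      linear_combination ‖rxW‖ ^ 2 * hpyth
    field_simp
    linear_combination hp2
  rw [hrs, real_inner_comm ruX ryX]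
  field_simp
end
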